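/- arXiv:2311.03147 — 2 statements merged into one kernel-verified Lean document; each statement's English description precedes it below -/
import Mathlib

section
/- For every integer ℘ ≥ 5 with ℘ ≡ 1 (mod 4), the Toeplitz graph T_℘⟨{1, 2, ℘−1}⟩ satisfies ℘/(℘−1) ≤ ldim_f(T_℘⟨{1, 2, ℘−1}⟩) ≤ 2℘/(℘+1). -/
/-!
Distances in `T_p⟨{1, 2, p - 1}⟩` are explicit: a shortest walk moves by steps of length `1` and
`2`, possibly passing once through the edge `{0, p - 1}`.

Lower bound: the `p` edges `{i, i + 1 mod p}` form a cycle, and every vertex is adjacent to both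
ends of one of them, so it resolves at most `p - 1` of them. Summing the `p` edge constraints of a
local resolving function `ζ` gives `p ≤ (p - 1) ∑ ζ`.

Upper bound, for `p = 4k + 1`: put weight `1 / (k + 1)` on each of the `2k + 1` even vertices.
For every edge, the even vertices that do not resolve it lie in a window of `k` consecutive ones on
the cycle `0, 2, …, 4k, 0`, so every edge is resolved by at least `k + 1` of them. The total weight
is `(2k + 1) / (k + 1) ≤ 2p / (p + 1)`.
-/

open Finset

/-- A local resolving function of a graph `G`: a map `ζ : V → [0,1]` such that for every
pair of adjacent vertices `u v`, the sum of `ζ` over the local resolving neighborhood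
`R{u,v} = {w : d(w,u) ≠ d(w,v)}` is at least `1`. -/
def IsLocalResolvingFunction {V : Type*} [Fintype V] (G : SimpleGraph V) (ζ : V → ℝ) : Prop :=
  (∀ w, ζ w ∈ Set.Icc (0 : ℝ) 1) ∧
    ∀ u v, G.Adj u v →
      1 ≤ ∑ w ∈ Finset.univ.filter (fun w => G.dist w u ≠ G.dist w v), ζ w

/-- The local fractional metric dimension of `G`: the minimum of `∑ v, ζ v` over all
local resolving functions `ζ` of `G`. -/
noncomputable def ldimf {V : Type*} [Fintype V] (G : SimpleGraph V) : ℝ :=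
  sInf {s : ℝ | ∃ ζ : V → ℝ, IsLocalResolvingFunction G ζ ∧ s = ∑ v, ζ v}

/-- The Toeplitz graph `T_n⟨S⟩` (vertices `0, …, n-1` standing for `1, …, n`):
two distinct vertices are adjacent iff their absolute difference lies in `S`. -/
def toeplitzGraph (n : ℕ) (S : Set ℕ) : SimpleGraph (Fin n) where
  Adj p q := p ≠ q ∧ Nat.dist (p : ℕ) (q : ℕ) ∈ S
  symm := ⟨fun p q ⟨h1, h2⟩ => ⟨h1.symm, by rwa [Nat.dist_comm]⟩⟩
  loopless := ⟨fun p ⟨h, _⟩ => h rfl⟩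

namespace SimpleGraph

variable {V : Type*} {G : SimpleGraph V}

theorem dist_eq_of_forall_exists_adj_lt (f : V → V → ℕ) (hself : ∀ a, f a a = 0)
    (hadj : ∀ x y b, G.Adj x y → f x b ≤ f y b + 1)
    (hdesc : ∀ a b, a ≠ b → ∃ c, G.Adj c b ∧ f a c < f a b) (a b : V) :
    G.dist a b = f a b := by
  have hle : ∀ {x y} (w : G.Walk x y), f x y ≤ w.length := by
    intro x y w
    induction w with
    | nil => simp [hself]
    | cons h _ ih => rw [Walk.length_cons]; exact (hadj _ _ _ h).trans (by omega)
  have hex : ∀ n b, f a b = n → ∃ w : G.Walk a b, w.length ≤ n := by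
    intro n
    induction n using Nat.strong_induction_on with
    | _ n ih =>
      intro b hb
      by_cases hab : a = b
      · subst hab
        exact ⟨.nil, by simp⟩
      obtain ⟨c, hcb, hlt⟩ := hdesc a b hab
      obtain ⟨w, hw⟩ := ih _ (hb ▸ hlt) c rfl
      exact ⟨w.concat hcb, by rw [Walk.length_concat]; omega⟩
  obtain ⟨w, hw⟩ := hex _ b rfl
  obtain ⟨w', hw'⟩ := Reachable.exists_walk_length_eq_dist ⟨w⟩
  exact le_antisymm ((dist_le w).trans hw) (hw' ▸ hle w')

end SimpleGraph

section LocalFractionalMetricDimension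

variable {V : Type*} [Fintype V] {G : SimpleGraph V}

theorem isLocalResolvingFunction_one (G : SimpleGraph V) : IsLocalResolvingFunction G 1 := by
  refine ⟨fun _ => ⟨zero_le_one, le_rfl⟩, fun u v huv => ?_⟩
  have hu : u ∈ univ.filter (fun w => G.dist w u ≠ G.dist w v) := by
    simp [SimpleGraph.dist_eq_one_iff_adj.mpr huv]
  exact single_le_sum (f := (1 : V → ℝ)) (fun _ _ => zero_le_one) hu

theorem ldimf_le {ζ : V → ℝ} (hζ : IsLocalResolvingFunction G ζ) : ldimf G ≤ ∑ v, ζ v :=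
  csInf_le ⟨0, by rintro _ ⟨ξ, hξ, rfl⟩; exact sum_nonneg fun w _ => (hξ.1 w).1⟩ ⟨ζ, hζ, rfl⟩

theorem le_ldimf {b : ℝ} (h : ∀ ζ, IsLocalResolvingFunction G ζ → b ≤ ∑ v, ζ v) :
    b ≤ ldimf G :=
  le_csInf ⟨_, 1, isLocalResolvingFunction_one G, rfl⟩ (by rintro _ ⟨ζ, hζ, rfl⟩; exact h ζ hζ)

theorem card_div_le_ldimf {ι : Type*} [Fintype ι] (a b : ι → V) (hab : ∀ i, G.Adj (a i) (b i))
    {m : ℕ} (hm : 0 < m) (hres : ∀ w, #{i | G.dist w (a i) ≠ G.dist w (b i)} ≤ m) :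
    (Fintype.card ι : ℝ) / m ≤ ldimf G := by
  refine le_ldimf fun ζ hζ => ?_
  rw [div_le_iff₀ (by exact_mod_cast hm), sum_mul]
  calc (Fintype.card ι : ℝ) = ∑ _i : ι, 1 := by simp
    _ ≤ ∑ i, ∑ w with G.dist w (a i) ≠ G.dist w (b i), ζ w :=
      sum_le_sum fun i _ => hζ.2 _ _ (hab i)
    _ = ∑ w, (#{i | G.dist w (a i) ≠ G.dist w (b i)} : ℝ) * ζ w := by
      simp_rw [sum_filter, card_filter, Nat.cast_sum, sum_mul]
      rw [sum_comm]
      simp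
    _ ≤ ∑ w, ζ w * m :=
      sum_le_sum fun w _ => by rw [mul_comm]; gcongr; exacts [(hζ.1 w).1, hres w]

theorem ldimf_le_card_div (S : Finset V) {r : ℕ} (hr : 0 < r)
    (hres : ∀ u v, G.Adj u v → r ≤ #{w ∈ S | G.dist w u ≠ G.dist w v}) :
    ldimf G ≤ #S / r := by
  classical
  have hr' : (1 : ℝ) ≤ r := by exact_mod_cast hr
  let ζ : V → ℝ := fun w => if w ∈ S then (r : ℝ)⁻¹ else 0
  have hζ : IsLocalResolvingFunction G ζ := by
    refine ⟨fun w => ⟨by positivity, ?_⟩, fun u v huv => ?_⟩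
    · unfold ζ; split_ifs
      exacts [inv_le_one_of_one_le₀ hr', zero_le_one]
    · have hcard : (r : ℝ) ≤ #{w ∈ S | G.dist w u ≠ G.dist w v} := by exact_mod_cast hres u v huv
      simp only [ζ, sum_ite_mem, sum_const, nsmul_eq_mul]
      rw [le_mul_inv_iff₀ (by positivity), one_mul, inter_comm, ← filter_mem_eq_inter]
      simpa using hcard
  refine (ldimf_le hζ).trans_eq ?_
  simp [ζ, sum_ite_mem, div_eq_mul_inv]

end LocalFractionalMetricDimension

theorem card_filter_le_of_cyclic_window {n : ℕ} (P : Fin n → Prop) [DecidablePred P] (c k : ℕ)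
    (h : ∀ j : Fin n, P j → (c ≤ j ∧ (j : ℕ) < c + k) ∨ (c ≤ j + n ∧ (j : ℕ) + n < c + k)) :
    #{j | P j} ≤ k := by
  calc #{j | P j}
      ≤ #(Ico c (c + k)) := by
        refine card_le_card_of_injOn
          (fun j : Fin n => if c ≤ (j : ℕ) ∧ (j : ℕ) < c + k then (j : ℕ) else j + n) ?_ ?_
        · intro j hj
          have := h j (by simpa using hj)
          simp only [coe_Ico, Set.mem_Ico]
          split_ifs <;> omega
        · intro j₁ _ j₂ _ he
          have := j₁.isLt
          have := j₂.isLt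
          simp only at he
          split_ifs at he <;> ext <;> omega
    _ = k := by simp

theorem toeplitzGraph_adj_iff {p : ℕ} {u v : Fin p} :
    (toeplitzGraph p {1, 2, p - 1}).Adj u v ↔
      u ≠ v ∧ (Nat.dist u v = 1 ∨ Nat.dist u v = 2 ∨ Nat.dist u v = p - 1) := by
  simp [toeplitzGraph]

/-- The two arguments of `min` are the lengths of the shortest routes from `a` to `b` using only
the steps `±1, ±2`, and through the edge `{0, p - 1}`. -/
def toeplitzDist (p a b : ℕ) : ℕ :=
  min ((max a b - min a b + 1) / 2) ((min a b + 1) / 2 + (p - max a b) / 2 + 1)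

theorem toeplitzDist_le_succ {p x y b : ℕ} (hx : x < p) (hy : y < p) (hb : b < p)
    (h : Nat.dist x y = 1 ∨ Nat.dist x y = 2 ∨ Nat.dist x y = p - 1) :
    toeplitzDist p x b ≤ toeplitzDist p y b + 1 := by
  simp only [Nat.dist] at h
  unfold toeplitzDist
  omega

/-- From `b`, one step towards `a` along the shorter of the two routes. -/
theorem exists_step_toeplitzDist_lt {p a b : ℕ} (ha : a < p) (hb : b < p) (hab : a ≠ b) :
    ∃ c < p, c ≠ b ∧ (Nat.dist c b = 1 ∨ Nat.dist c b = 2 ∨ Nat.dist c b = p - 1) ∧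
      toeplitzDist p a c < toeplitzDist p a b := by
  simp only [Nat.dist, toeplitzDist]
  rcases Nat.lt_or_gt_of_ne hab with h | h
  · by_cases hf : (b - a + 1) / 2 ≤ (a + 1) / 2 + (p - b) / 2 + 1
    · by_cases hb : b = a + 1
      · exact ⟨a, by omega⟩
      · exact ⟨b - 2, by omega⟩
    · by_cases hb : b + 3 ≤ p
      · exact ⟨b + 2, by omega⟩
      · by_cases hb2 : b + 2 = p
        · exact ⟨b + 1, by omega⟩
        · exact ⟨0, by omega⟩
  · by_cases hf : (a - b + 1) / 2 ≤ (b + 1) / 2 + (p - a) / 2 + 1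
    · by_cases hb : a = b + 1
      · exact ⟨a, by omega⟩
      · exact ⟨b + 2, by omega⟩
    · by_cases hb : 2 ≤ b
      · exact ⟨b - 2, by omega⟩
      · by_cases hb2 : b = 1
        · exact ⟨0, by omega⟩
        · exact ⟨p - 1, by omega⟩

theorem toeplitzGraph_dist {p : ℕ} (a b : Fin p) :
    (toeplitzGraph p {1, 2, p - 1}).dist a b = toeplitzDist p a b :=
  SimpleGraph.dist_eq_of_forall_exists_adj_lt (fun a b : Fin p => toeplitzDist p a b)
    (fun a => by simp [toeplitzDist])
    (fun x y b h => toeplitzDist_le_succ x.isLt y.isLt b.isLt (toeplitzGraph_adj_iff.mp h).2)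
    (fun a b hab => by
      obtain ⟨c, hc, hcb, hstep, hlt⟩ :=
        exists_step_toeplitzDist_lt a.isLt b.isLt (Fin.val_ne_of_ne hab)
      exact ⟨⟨c, hc⟩, toeplitzGraph_adj_iff.mpr ⟨fun h => hcb (congrArg Fin.val h), hstep⟩, hlt⟩)
    a b

theorem coe_finRotate_eq_ite {p : ℕ} (i : Fin p) :
    (finRotate p i : ℕ) = if (i : ℕ) + 1 < p then (i : ℕ) + 1 else 0 := by
  obtain ⟨n, rfl⟩ : ∃ n, p = n + 1 := ⟨p - 1, by have := i.pos; omega⟩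
  simp only [coe_finRotate, Fin.ext_iff, Fin.val_last]
  split_ifs <;> omega

theorem toeplitzGraph_adj_finRotate {p : ℕ} (hp : 2 ≤ p) (i : Fin p) :
    (toeplitzGraph p {1, 2, p - 1}).Adj i (finRotate p i) := by
  have := i.isLt
  rw [toeplitzGraph_adj_iff, Ne, Fin.ext_iff, coe_finRotate_eq_ite]
  split_ifs <;> simp only [Nat.dist] <;> omega

/-- `w` is adjacent to both ends of `{w + 1, w + 2}` or of `{w - 2, w - 1}`. -/
theorem exists_dist_eq_dist_finRotate {p : ℕ} (hp : 4 ≤ p) (w : Fin p) :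
    ∃ i, (toeplitzGraph p {1, 2, p - 1}).dist w i =
      (toeplitzGraph p {1, 2, p - 1}).dist w (finRotate p i) := by
  have := w.isLt
  simp only [toeplitzGraph_dist, coe_finRotate_eq_ite, toeplitzDist]
  by_cases hw : (w : ℕ) + 2 < p
  · exact ⟨⟨w + 1, by omega⟩, by simp only; split_ifs <;> omega⟩
  · exact ⟨⟨w - 2, by omega⟩, by simp only; split_ifs <;> omega⟩

theorem div_pred_le_ldimf_toeplitzGraph {p : ℕ} (hp : 4 ≤ p) :
    (p : ℝ) / (p - 1) ≤ ldimf (toeplitzGraph p {1, 2, p - 1}) := by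
  have h := card_div_le_ldimf id (finRotate p) (toeplitzGraph_adj_finRotate (by omega))
    (m := p - 1) (by omega) fun w => by
      obtain ⟨i, hi⟩ := exists_dist_eq_dist_finRotate hp w
      exact Nat.le_sub_one_of_lt
        ((card_lt_univ_of_notMem (x := i) (by simp [hi])).trans_eq (Fintype.card_fin p))
  simpa [Nat.cast_pred (by omega : 0 < p)] using h

section ModFourOne

variable {p k : ℕ}

/-- Through the edge `{0, 4k}` the even vertices `0, 2, …, 4k` form a cycle of length `2k + 1`,
on which `j` and `j + (2k + 1)` name the same vertex `2j`. -/
theorem exists_cyclic_window_of_toeplitzDist_eq {k u v : ℕ} (hu : u < 4 * k + 1)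
    (hv : v < 4 * k + 1) (huv : u ≠ v)
    (h : Nat.dist u v = 1 ∨ Nat.dist u v = 2 ∨ Nat.dist u v = 4 * k) :
    ∃ c, ∀ j < 2 * k + 1,
      toeplitzDist (4 * k + 1) (2 * j) u = toeplitzDist (4 * k + 1) (2 * j) v →
        (c ≤ j ∧ j < c + k) ∨ (c ≤ j + (2 * k + 1) ∧ j + (2 * k + 1) < c + k) := by
  wlog hlt : u < v generalizing u v
  · obtain ⟨c, hc⟩ := this hv hu huv.symm (Nat.dist_comm u v ▸ h) (by omega)
    exact ⟨c, fun j hj he => hc j hj he.symm⟩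
  simp only [Nat.dist] at h
  rcases h with h | h | h
  · obtain rfl : v = u + 1 := by omega
    rcases Nat.even_or_odd' u with ⟨m, rfl | rfl⟩
    · refine ⟨m + 1, fun j hj he => ?_⟩
      unfold toeplitzDist at he; omega
    · refine ⟨m + k + 2, fun j hj he => ?_⟩
      unfold toeplitzDist at he; omega
  · obtain rfl : v = u + 2 := by omega
    rcases Nat.even_or_odd' u with ⟨m, rfl | rfl⟩
    · refine ⟨m + k + 1, fun j hj he => ?_⟩
      unfold toeplitzDist at he; omega
    · refine ⟨m + 1, fun j hj he => ?_⟩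
      unfold toeplitzDist at he; omega
  · obtain ⟨rfl, rfl⟩ : u = 0 ∧ v = 4 * k := by omega
    refine ⟨k, fun j hj he => ?_⟩
    unfold toeplitzDist at he; omega

def evenVertex (hpk : p = 4 * k + 1) : Fin (2 * k + 1) ↪ Fin p :=
  ⟨fun j => ⟨2 * j, by omega⟩, fun i j h => by simpa [Fin.ext_iff] using h⟩

theorem le_card_filter_evenVertex_resolving (hpk : p = 4 * k + 1) {u v : Fin p}
    (huv : (toeplitzGraph p {1, 2, p - 1}).Adj u v) :
    k + 1 ≤ #{j | (toeplitzGraph p {1, 2, p - 1}).dist (evenVertex hpk j) u ≠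
      (toeplitzGraph p {1, 2, p - 1}).dist (evenVertex hpk j) v} := by
  set G := toeplitzGraph p {1, 2, p - 1}
  obtain ⟨hne, hstep⟩ := toeplitzGraph_adj_iff.mp huv
  obtain ⟨c, hc⟩ := exists_cyclic_window_of_toeplitzDist_eq (k := k) (hpk ▸ u.isLt)
    (hpk ▸ v.isLt) (Fin.val_ne_of_ne hne) (by omega)
  have hunresolved : #{j | G.dist (evenVertex hpk j) u = G.dist (evenVertex hpk j) v} ≤ k :=
    card_filter_le_of_cyclic_window _ c k fun j hj => hc j j.isLt <| by
      rw [toeplitzGraph_dist, toeplitzGraph_dist] at hj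
      subst hpk
      exact hj
  have hsplit := card_filter_add_card_filter_not (s := univ)
    (p := fun j => G.dist (evenVertex hpk j) u ≠ G.dist (evenVertex hpk j) v)
  simp only [not_not, card_univ, Fintype.card_fin] at hsplit
  omega

theorem ldimf_toeplitzGraph_le (hpk : p = 4 * k + 1) :
    ldimf (toeplitzGraph p {1, 2, p - 1}) ≤ (2 * k + 1) / (k + 1) := by
  have := ldimf_le_card_div (univ.map (evenVertex hpk)) k.succ_pos fun u v huv => by
    rw [filter_map, card_map]
    exact le_card_filter_evenVertex_resolving hpk huv
  simpa using this

end ModFourOne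

/-- For every integer `℘ ≥ 5` with `℘ ≡ 1 (mod 4)`,
`℘/(℘-1) ≤ ldimf(T_℘⟨{1, 2, ℘-1}⟩) ≤ 2℘/(℘+1)`. -/
theorem ldimf_toeplitz_mod_four_one (p : ℕ) (hp : 5 ≤ p) (hmod : p % 4 = 1) :
    (p : ℝ) / ((p : ℝ) - 1) ≤ ldimf (toeplitzGraph p {1, 2, p - 1}) ∧
      ldimf (toeplitzGraph p {1, 2, p - 1}) ≤ 2 * (p : ℝ) / ((p : ℝ) + 1) := by
  obtain ⟨k, hpk⟩ : ∃ k, p = 4 * k + 1 := ⟨p / 4, by omega⟩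
  refine ⟨div_pred_le_ldimf_toeplitzGraph (by omega), (ldimf_toeplitzGraph_le hpk).trans ?_⟩
  have hp' : (p : ℝ) = 4 * k + 1 := by exact_mod_cast hpk
  rw [hp', div_le_div_iff₀ (by positivity) (by positivity)]
  nlinarith
end

section
/- For any two distinct odd primes p and q, the zero-divisor graph G(Z_{pq}) satisfies ldim_f(G(Z_{pq})) = 1. -/
open Finset

/-- The zero-divisor graph `G(Z_n)`: vertices are the zero divisors of `Z_n`
(residues `x ≢ 0 (mod n)` with `gcd(x, n) > 1`), two distinct vertices `x, y` being
adjacent iff `x·y ≡ 0 (mod n)`. -/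
def zeroDivisorGraph (n : ℕ) : SimpleGraph {x : Fin n // x.val ≠ 0 ∧ 1 < Nat.gcd x.val n} where
  Adj x y := x ≠ y ∧ (x.1.val * y.1.val) % n = 0
  symm := ⟨fun x y ⟨h1, h2⟩ => ⟨h1.symm, by rwa [Nat.mul_comm]⟩⟩
  loopless := ⟨fun x ⟨h, _⟩ => h rfl⟩

/-!
The graph `G(Z_{pq})` is complete bipartite between the nonzero multiples of `p` and those of
`q`. Hence the vertex `p` is at distance `1` from one end of every edge and not from the other,
so the indicator of `p` is a local resolving function of total weight `1`; and any local resolving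
function has weight at least `1`, since the graph has an edge.
-/

section LocalResolving

variable {V : Type*} [Fintype V] {G : SimpleGraph V}

theorem IsLocalResolvingFunction.one_le_sum {ζ : V → ℝ} (hζ : IsLocalResolvingFunction G ζ)
    {u v : V} (huv : G.Adj u v) : 1 ≤ ∑ w, ζ w :=
  (hζ.2 u v huv).trans <|
    sum_le_sum_of_subset_of_nonneg (filter_subset _ _) fun w _ _ => (hζ.1 w).1

theorem isLocalResolvingFunction_single [DecidableEq V] {w₀ : V}
    (hw₀ : ∀ u v, G.Adj u v → G.dist w₀ u ≠ G.dist w₀ v) :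
    IsLocalResolvingFunction G (Pi.single w₀ 1) := by
  refine ⟨fun w => ?_, fun u v huv => ?_⟩
  · rcases eq_or_ne w w₀ with rfl | hw
    · simp
    · simp [hw]
  · rw [sum_pi_single', if_pos]
    exact mem_filter.2 ⟨mem_univ _, hw₀ u v huv⟩

theorem ldimf_eq_one_of_forall_adj_dist_ne {u v w₀ : V} (huv : G.Adj u v)
    (hw₀ : ∀ u v, G.Adj u v → G.dist w₀ u ≠ G.dist w₀ v) : ldimf G = 1 := by
  classical
  have hlower : ∀ s ∈ {s : ℝ | ∃ ζ : V → ℝ, IsLocalResolvingFunction G ζ ∧ s = ∑ v, ζ v},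
      1 ≤ s := by
    rintro s ⟨ζ, hζ, rfl⟩
    exact hζ.one_le_sum huv
  have hone : (1 : ℝ) ∈ {s : ℝ | ∃ ζ : V → ℝ, IsLocalResolvingFunction G ζ ∧ s = ∑ v, ζ v} :=
    ⟨_, isLocalResolvingFunction_single hw₀, (Fintype.sum_pi_single' w₀ 1).symm⟩
  exact le_antisymm (csInf_le ⟨1, hlower⟩ hone) (le_csInf ⟨1, hone⟩ hlower)

end LocalResolving

namespace zeroDivisorGraph

def ofDvd {n d : ℕ} (hd : d ∣ n) (hd₁ : 1 < d) (hdn : d < n) :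
    {x : Fin n // x.val ≠ 0 ∧ 1 < Nat.gcd x.val n} :=
  ⟨⟨d, hdn⟩, show d ≠ 0 by omega, by rwa [Fin.val_mk, Nat.gcd_eq_left hd]⟩

theorem not_dvd {n : ℕ} (x : {x : Fin n // x.val ≠ 0 ∧ 1 < Nat.gcd x.val n}) :
    ¬ n ∣ x.1.val :=
  fun h => x.2.1 (Nat.eq_zero_of_dvd_of_lt h x.1.isLt)

variable {p q : ℕ} (hp : p.Prime) (hq : q.Prime) (hne : p ≠ q)
include hp hq hne

theorem not_dvd_and_dvd (x : {x : Fin (p * q) // x.val ≠ 0 ∧ 1 < Nat.gcd x.val (p * q)}) :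
    ¬ (p ∣ x.1.val ∧ q ∣ x.1.val) :=
  fun ⟨hpx, hqx⟩ =>
    not_dvd x (((Nat.coprime_primes hp hq).2 hne).mul_dvd_of_dvd_of_dvd hpx hqx)

theorem adj_iff {u v : {x : Fin (p * q) // x.val ≠ 0 ∧ 1 < Nat.gcd x.val (p * q)}} :
    (zeroDivisorGraph (p * q)).Adj u v ↔
      (p ∣ u.1.val ∧ q ∣ v.1.val) ∨ (q ∣ u.1.val ∧ p ∣ v.1.val) := by
  have hu := not_dvd_and_dvd hp hq hne u
  have hv := not_dvd_and_dvd hp hq hne v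
  constructor
  · rintro ⟨-, huv⟩
    have hpq : p * q ∣ u.1.val * v.1.val := Nat.dvd_of_mod_eq_zero huv
    rcases hp.dvd_mul.1 (dvd_of_mul_right_dvd hpq) with hpu | hpv <;>
    rcases hq.dvd_mul.1 (dvd_of_mul_left_dvd hpq) with hqu | hqv <;> tauto
  · rintro (⟨hpu, hqv⟩ | ⟨hqu, hpv⟩)
    · refine ⟨?_, Nat.mod_eq_zero_of_dvd (mul_dvd_mul hpu hqv)⟩
      rintro rfl
      exact hu ⟨hpu, hqv⟩
    · refine ⟨?_, Nat.mod_eq_zero_of_dvd ?_⟩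
      · rintro rfl
        exact hu ⟨hpv, hqu⟩
      · exact (mul_dvd_mul hpv hqu).trans (mul_comm _ _).dvd

theorem adj_ofDvd_left_iff {x : {x : Fin (p * q) // x.val ≠ 0 ∧ 1 < Nat.gcd x.val (p * q)}} :
    (zeroDivisorGraph (p * q)).Adj
        (ofDvd (dvd_mul_right p q) hp.one_lt (lt_mul_right hp.pos hq.one_lt)) x ↔
      q ∣ x.1.val := by
  have hqp : ¬ q ∣ p := fun h => hne ((Nat.prime_dvd_prime_iff_eq hq hp).1 h).symm
  simp [adj_iff hp hq hne, ofDvd, hqp]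

theorem dist_ofDvd_left_ne {u v : {x : Fin (p * q) // x.val ≠ 0 ∧ 1 < Nat.gcd x.val (p * q)}}
    (huv : (zeroDivisorGraph (p * q)).Adj u v) :
    (zeroDivisorGraph (p * q)).dist
        (ofDvd (dvd_mul_right p q) hp.one_lt (lt_mul_right hp.pos hq.one_lt)) u ≠
      (zeroDivisorGraph (p * q)).dist
        (ofDvd (dvd_mul_right p q) hp.one_lt (lt_mul_right hp.pos hq.one_lt)) v := by
  have hdist : ∀ x, (zeroDivisorGraph (p * q)).dist
      (ofDvd (dvd_mul_right p q) hp.one_lt (lt_mul_right hp.pos hq.one_lt)) x = 1 ↔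
        q ∣ x.1.val :=
    fun x => SimpleGraph.dist_eq_one_iff_adj.trans (adj_ofDvd_left_iff hp hq hne)
  intro h
  rcases (adj_iff hp hq hne).1 huv with ⟨hpu, hqv⟩ | ⟨hqu, hpv⟩
  · exact not_dvd_and_dvd hp hq hne u ⟨hpu, (hdist u).1 (h.trans ((hdist v).2 hqv))⟩
  · exact not_dvd_and_dvd hp hq hne v ⟨hpv, (hdist v).1 (h.symm.trans ((hdist u).2 hqu))⟩

end zeroDivisorGraph

theorem ldimf_zeroDivisorGraph_p_q_general (p q : ℕ) (hp : p.Prime) (hq : q.Prime)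
    (hne : p ≠ q) :
    ldimf (zeroDivisorGraph (p * q)) = 1 :=
  have hpq : (zeroDivisorGraph (p * q)).Adj
      (zeroDivisorGraph.ofDvd (dvd_mul_right p q) hp.one_lt (lt_mul_right hp.pos hq.one_lt))
      (zeroDivisorGraph.ofDvd (dvd_mul_left q p) hq.one_lt (lt_mul_left hq.pos hp.one_lt)) :=
    (zeroDivisorGraph.adj_ofDvd_left_iff hp hq hne).2 (dvd_refl q)
  ldimf_eq_one_of_forall_adj_dist_ne hpq fun _ _ => zeroDivisorGraph.dist_ofDvd_left_ne hp hq hne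

/-- For any two distinct odd primes `p` and `q`, `ldimf(G(Z_{pq})) = 1`. -/
theorem ldimf_zeroDivisorGraph_p_q (p q : ℕ) (hp : p.Prime) (hq : q.Prime)
    (hop : Odd p) (hoq : Odd q) (hne : p ≠ q) :
    ldimf (zeroDivisorGraph (p * q)) = 1 :=
  ldimf_zeroDivisorGraph_p_q_general p q hp hq hne
end
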